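/- There exists a 4×4 pairwise comparison matrix B (namely the matrix with rows (1, 1, 1, 9), (1, 1, 2, 5), (1, 1/2, 1, 9), (1/9, 1/5, 1/9, 1)), positive vectors w and v, and real numbers λ, μ such that B·w = λ·w and B⁻·v = μ·v, with w_1 < w_2 and v_1 < v_2. Hence the Eigenvector Method violates inversion already for four alternatives. -/
import Mathlib


/-- A pairwise comparison matrix: all entries positive and `A j i = 1 / A i j`. -/
def IsPCM {n : ℕ} (A : Matrix (Fin n) (Fin n) ℝ) : Prop :=
  (∀ i j, 0 < A i j) ∧ ∀ i j, A j i = 1 / A i j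

/-- The opposite of a pairwise comparison matrix: all preferences are reversed. -/
noncomputable def opp {n : ℕ} (A : Matrix (Fin n) (Fin n) ℝ) :
    Matrix (Fin n) (Fin n) ℝ :=
  Matrix.of fun i j => 1 / A i j

/-- The minimal 4×4 counterexample matrix `B`. -/
noncomputable def Bmat : Matrix (Fin 4) (Fin 4) ℝ :=
  !![1,   1,   1,   9;
     1,   1,   2,   5;
     1,   1/2, 1,   9;
     1/9, 1/5, 1/9, 1]

/-- The cubic whose Perron root is the maximal eigenvalue of `Bmat`. -/
lemma exists_root_cubic : ∃ x ∈ Set.Icc (4:ℝ) 5, x^3 - 4*x^2 - 41/15 = 0 := by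
  have hc : ContinuousOn (fun x : ℝ => x^3 - 4*x^2 - 41/15) (Set.Icc 4 5) := by
    fun_prop
  have h := intermediate_value_Icc (by norm_num : (4:ℝ) ≤ 5) hc
  have h0 : (0:ℝ) ∈ Set.Icc ((4:ℝ)^3 - 4*4^2 - 41/15) ((5:ℝ)^3 - 4*5^2 - 41/15) := by
    constructor <;> norm_num
  obtain ⟨x, hx, hfx⟩ := h h0
  exact ⟨x, hx, hfx⟩

/-- The Eigenvector Method violates inversion already with four alternatives:
for the 4×4 pairwise comparison matrix `Bmat`, the positive (Perron) eigenvector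
of `Bmat` ranks alternative 2 strictly above alternative 1, and so does the
positive (Perron) eigenvector of its opposite. -/
theorem em_violates_inversion_four :
    IsPCM Bmat ∧
      ∃ (w v : Fin 4 → ℝ) (lam mu : ℝ),
        (∀ i, 0 < w i) ∧ (∀ i, 0 < v i) ∧
        Bmat.mulVec w = lam • w ∧ (opp Bmat).mulVec v = mu • v ∧
        w 0 < w 1 ∧ v 0 < v 1 := by
  obtain ⟨lam, ⟨hl, hr⟩, hq⟩ := exists_root_cubic
  refine ⟨⟨?_, ?_⟩, ?_⟩
  · intro i j; fin_cases i <;> fin_cases j <;> norm_num [Bmat]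
  · intro i j; fin_cases i <;> fin_cases j <;> norm_num [Bmat]
  refine ⟨![lam^2 + 77/90, lam^2 + 5/9*lam, lam^2 - 1/2*lam + 26/45,
            1/9*lam^2 + 4/45*lam + 13/90],
          ![lam^2 + 77/90, lam^2 + 3/10*lam, lam^2 + lam + 52/45,
            9*lam^2 - 4*lam + 13/2],
          lam, lam, ?_, ?_, ?_, ?_, ?_, ?_⟩
  · intro i; fin_cases i <;> · simp; nlinarith
  · intro i; fin_cases i <;> · simp; nlinarith
  · funext i
    fin_cases i <;>
      simp [Bmat, Matrix.mulVec, dotProduct, Fin.sum_univ_four] <;>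
      ring_nf <;> nlinarith [hq, sq_nonneg lam]
  · funext i
    fin_cases i <;>
      simp [opp, Bmat, Matrix.mulVec, dotProduct, Fin.sum_univ_four] <;>
      ring_nf <;> nlinarith [hq, sq_nonneg lam]
  · simp; nlinarith
  · simp; nlinarith
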